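/- Let (Z_n)_{n≥1} be a chain with complete connections with values in a finite alphabet Σ, minorized by α > 0: Pr(Z_1 = σ_1) ≥ α for all σ_1 ∈ Σ, and Pr(Z_n = σ_n | Z_{n-1} = σ_{n-1}, …, Z_1 = σ_1) ≥ α for all n ≥ 2 and all σ_1, …, σ_n ∈ Σ. Let μ be the joint distribution of (Z_1, Z_2, …) on the Cantor space (Σ^∞, ϱ) with the Baire metric. Then μ satisfies the doubling condition: there exist r_0, c > 0 such that μ(N_{2r}{ψ}) ≤ c · μ(N_r{ψ}) for all ψ ∈ Σ^∞ and 0 < r < r_0 (indeed one may take c = 1/α); consequently the set of non-disjunctive sequences is μ-null and the chain generates a disjunctive sequence almost surely. -/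

import Mathlib

open Metric Filter Set MeasureTheory

/-- A sequence of symbols is disjunctive if it contains every finite word
as a block of consecutive letters. -/
def Disjunctive {Γ : Type*} (σ : ℕ → Γ) : Prop :=
  ∀ (m : ℕ) (w : Fin m → Γ), ∃ j : ℕ, ∀ l : Fin m, σ (j + l.1) = w l

open Classical in
/-- The Baire metric `ϱ(x,y) = 2^{-min{i ≥ 1 : x_i ≠ y_i}}` on the Cantor space of
(0-indexed) sequences: here `min` of the 1-indexed paper corresponds to `sInf + 1`. -/
noncomputable def baireDist {Γ : Type*} (x y : ℕ → Γ) : ℝ :=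
  if x = y then 0 else (2 : ℝ) ^ (-((sInf {i : ℕ | x i ≠ y i} : ℕ) : ℤ) - 1)

/-- `Ψ` is porous with respect to the distance function `ρ`. -/
def PorousWith {M : Type*} (ρ : M → M → ℝ) (Ψ : Set M) : Prop :=
  ∃ lam : ℝ, 0 < lam ∧ lam < 1 ∧ ∃ r₀ : ℝ, 0 < r₀ ∧
    ∀ ψ ∈ Ψ, ∀ r : ℝ, 0 < r → r < r₀ →
      ∃ υ : M, {x : M | ρ υ x < lam * r} ⊆ {x : M | ρ ψ x < r} \ Ψ

/-- `Ψ` is σ-porous with respect to `ρ`: a countable union of porous sets. -/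
def SigmaPorousWith {M : Type*} (ρ : M → M → ℝ) (Ψ : Set M) : Prop :=
  ∃ c : ℕ → Set M, (∀ n : ℕ, PorousWith ρ (c n)) ∧ Ψ = ⋃ n : ℕ, c n

/-!
Minorization says that every cylinder of length `n + 1` carries at least `α` times the mass of
its parent cylinder of length `n`. Balls of the Baire metric are cylinders, and halving the radius
lengthens the cylinder by exactly one letter, which gives the doubling bound with constant `1/α`.
Iterating over `m` letters, a fixed word of length `m` fills a given block of `m` positions with
probability at least `α ^ m` conditionally on any event about the earlier positions, so it is
missing from the first `N` disjoint blocks with probability at most `(1 - α ^ m) ^ N → 0`.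
As there are countably many words, almost every sequence contains all of them.
-/

open PiNat

open scoped ENNReal Topology

section Cylinder

variable {Γ : Type*}

lemma cylinder_update_succ (x : ℕ → Γ) (n : ℕ) (γ : Γ) :
    cylinder (Function.update x n γ) (n + 1) = cylinder x n ∩ {y | y n = γ} := by
  ext y
  simp only [mem_cylinder_iff, mem_inter_iff, mem_ofPred_eq, Nat.lt_succ_iff_lt_or_eq,
    or_imp, forall_and, forall_eq, Function.update_self]
  refine and_congr_left' (forall₂_congr fun i hi => ?_)
  rw [Function.update_of_ne hi.ne]

lemma cylinder_eq_preimage_restrict (x : ℕ → Γ) (n : ℕ) :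
    cylinder x n = (fun y (i : Fin n) => y i) ⁻¹' {fun i : Fin n => x i} := by
  ext y
  simp [funext_iff, Fin.forall_iff]

lemma measurableSet_cylinder [MeasurableSpace Γ] [MeasurableSingletonClass Γ]
    (x : ℕ → Γ) (n : ℕ) : MeasurableSet (cylinder x n) := by
  rw [cylinder_eq_pi]
  exact .pi (Finset.range n).countable_toSet fun i _ => measurableSet_singleton (x i)

lemma measurableSet_setOf_disjunctive [MeasurableSpace Γ] [Countable Γ]
    [MeasurableSingletonClass Γ] : MeasurableSet {σ : ℕ → Γ | Disjunctive σ} := by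
  simp only [Disjunctive, ofPred_forall, ofPred_exists]
  exact .iInter fun m => .iInter fun w => .iUnion fun j => .iInter fun l =>
    measurableSet_eq_fun (measurable_pi_apply _) measurable_const

end Cylinder

section BaireMetric

variable {Γ : Type*}

lemma baireDist_eq_of_ne {ψ x : ℕ → Γ} (h : ψ ≠ x) :
    baireDist ψ x = (1 / 2 : ℝ) ^ (firstDiff ψ x + 1) := by
  classical
  have hne : {i : ℕ | ψ i ≠ x i}.Nonempty := Function.ne_iff.1 h
  have hinf : sInf {i : ℕ | ψ i ≠ x i} = firstDiff ψ x :=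
    le_antisymm (Nat.sInf_le (apply_firstDiff_ne h))
      (not_lt.1 fun hlt => Nat.sInf_mem hne (apply_eq_of_lt_firstDiff hlt))
  rw [baireDist, if_neg h, hinf, one_div, inv_pow, ← zpow_natCast, ← zpow_neg]
  push_cast
  ring_nf

lemma baireDist_lt_iff_mem_cylinder {ψ x : ℕ → Γ} {r : ℝ} {n : ℕ}
    (hr : (1 / 2 : ℝ) ^ (n + 1) < r) (hr' : r ≤ (1 / 2 : ℝ) ^ n) :
    baireDist ψ x < r ↔ x ∈ cylinder ψ n := by
  rcases eq_or_ne ψ x with rfl | h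
  · simpa [baireDist] using (pow_pos (by norm_num) _).trans hr
  rw [baireDist_eq_of_ne h, mem_cylinder_iff_le_firstDiff h.symm, firstDiff_comm]
  constructor
  · intro hlt
    by_contra! hkn
    exact (hr'.trans (pow_le_pow_of_le_one (by norm_num) (by norm_num) hkn)).not_gt hlt
  · intro hnk
    exact (pow_le_pow_of_le_one (by norm_num) (by norm_num) (by omega)).trans_lt hr

end BaireMetric

/-- `Pr(Z_{n+1} = x n | Z_1 = x 0, …, Z_n = x (n - 1)) ≥ α`, multiplied out so that null
cylinders need no convention for the conditional probability. -/
def IsMinorizedBy {Γ : Type*} [MeasurableSpace Γ] (μ : Measure (ℕ → Γ)) (α : ℝ≥0∞) :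
    Prop :=
  ∀ (x : ℕ → Γ) (n : ℕ), α * μ (cylinder x n) ≤ μ (cylinder x (n + 1))

lemma isMinorizedBy_map {Γ : Type*} [MeasurableSpace Γ] [MeasurableSingletonClass Γ]
    {S : Type*} [MeasurableSpace S] {Pr : Measure S} {Z : ℕ → S → Γ}
    (hZ : ∀ n, Measurable (Z n)) {α : ℝ≥0∞}
    (hmin : ∀ (n : ℕ) (w : Fin (n + 1) → Γ),
      α * Pr {s : S | ∀ i : Fin n, Z i.1 s = w i.castSucc}
        ≤ Pr {s : S | ∀ i : Fin (n + 1), Z i.1 s = w i}) :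
    IsMinorizedBy (Pr.map fun s n => Z n s) α := by
  intro x n
  have hcyl : ∀ k,
      (Pr.map fun s n => Z n s) (cylinder x k) = Pr {s | ∀ i : Fin k, Z i s = x i} := fun k => by
    rw [Measure.map_apply (measurable_pi_lambda _ hZ) (measurableSet_cylinder x k)]
    congr 1
    ext s
    simp [Fin.forall_iff]
  rw [hcyl, hcyl]
  exact hmin n fun i => x i

namespace IsMinorizedBy

variable {Γ : Type*} [MeasurableSpace Γ] {μ : Measure (ℕ → Γ)} {α : ℝ≥0∞}

lemma measure_baireDist_lt_two_mul_le [IsFiniteMeasure μ] (hμ : IsMinorizedBy μ α)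
    (hα : α ≠ 0) (ψ : ℕ → Γ) {r : ℝ} (hr : 0 < r) (hr' : r < 1 / 2) :
    μ {x | baireDist ψ x < 2 * r} ≤ α⁻¹ * μ {x | baireDist ψ x < r} := by
  obtain ⟨n, hn, hn'⟩ := exists_nat_pow_near_of_lt_one (by positivity : 0 < 2 * r)
    (by linarith : 2 * r ≤ 1) (by norm_num : (0 : ℝ) < 1 / 2) (by norm_num)
  have hball₂ : {x | baireDist ψ x < 2 * r} = cylinder ψ n :=
    ext fun x => baireDist_lt_iff_mem_cylinder hn hn'
  have hball : {x | baireDist ψ x < r} = cylinder ψ (n + 1) :=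
    ext fun x => baireDist_lt_iff_mem_cylinder (by rw [pow_succ]; linarith)
      (by rw [pow_succ]; linarith)
  rw [hball₂, hball, mul_comm, ← div_eq_mul_inv,
    ENNReal.le_div_iff_mul_le (Or.inl hα) (Or.inr (measure_ne_top _ _)), mul_comm]
  exact hμ ψ n

lemma mul_measure_cylinder_le (hμ : IsMinorizedBy μ α) (x : ℕ → Γ) (n : ℕ) (γ : Γ) :
    α * μ (cylinder x n) ≤ μ (cylinder x n ∩ {y | y n = γ}) := by
  have h := hμ (Function.update x n γ) n
  rwa [(mem_cylinder_iff_eq).1 (update_mem_cylinder x n γ), cylinder_update_succ] at h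

section Finite

variable [Finite Γ] [MeasurableSingletonClass Γ]

lemma mul_measure_le_inter (hμ : IsMinorizedBy μ α) {n : ℕ} {A : Set (ℕ → Γ)}
    (hA : ∀ x ∈ A, cylinder x n ⊆ A) (γ : Γ) :
    α * μ A ≤ μ (A ∩ {y | y n = γ}) := by
  set π : (ℕ → Γ) → Fin n → Γ := fun y i => y i
  have hπ : Measurable π := measurable_pi_lambda _ fun i => measurable_pi_apply _
  have hAπ : A = π ⁻¹' (π '' A) := by
    refine (subset_preimage_image π A).antisymm ?_
    rintro y ⟨x, hx, hxy⟩
    refine hA x hx ?_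
    rw [cylinder_eq_preimage_restrict]
    exact hxy.symm
  set T : Finset (Fin n → Γ) := (Set.toFinite (π '' A)).toFinset
  have hfib : ∀ v ∈ T, MeasurableSet (π ⁻¹' {v}) :=
    fun v _ => hπ (measurableSet_singleton v)
  have hB : MeasurableSet {y : ℕ → Γ | y n = γ} :=
    measurableSet_eq_fun (measurable_pi_apply n) measurable_const
  have hsum : ∀ ν : Measure (ℕ → Γ), ν A = ∑ v ∈ T, ν (π ⁻¹' {v}) := fun ν => by
    rw [sum_measure_preimage_singleton T hfib, Set.Finite.coe_toFinset, ← hAπ]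
  rw [← Measure.restrict_apply' hB, hsum, hsum, Finset.mul_sum]
  refine Finset.sum_le_sum fun v hv => ?_
  obtain ⟨x, -, rfl⟩ := (Set.Finite.mem_toFinset _).1 hv
  rw [Measure.restrict_apply' hB, ← cylinder_eq_preimage_restrict]
  exact hμ.mul_measure_cylinder_le x n γ

lemma pow_mul_measure_le_inter_block (hμ : IsMinorizedBy μ α) {m : ℕ} (w : Fin m → Γ)
    {n : ℕ} {A : Set (ℕ → Γ)} (hA : ∀ x ∈ A, cylinder x n ⊆ A) :
    α ^ m * μ A ≤ μ (A ∩ {y | ∀ l : Fin m, y (n + l) = w l}) := by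
  induction m generalizing n A with
  | zero => simp
  | succ m ih =>
    have hA' : ∀ x ∈ A ∩ {y | y n = w 0}, cylinder x (n + 1) ⊆ A ∩ {y | y n = w 0} :=
      fun x hx y hy =>
        ⟨hA x hx.1 (cylinder_anti x n.le_succ hy), (hy n n.lt_succ_self).trans hx.2⟩
    calc α ^ (m + 1) * μ A = α ^ m * (α * μ A) := by rw [pow_succ, mul_assoc]
      _ ≤ α ^ m * μ (A ∩ {y | y n = w 0}) := by
        gcongr; exact hμ.mul_measure_le_inter hA (w 0)
      _ ≤ μ (A ∩ {y | y n = w 0} ∩ {y | ∀ l : Fin m, y (n + 1 + l) = w l.succ}) :=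
        ih (fun l => w l.succ) hA'
      _ ≤ μ (A ∩ {y | ∀ l : Fin (m + 1), y (n + l) = w l}) := by
        refine measure_mono fun y ⟨⟨hyA, hy0⟩, hy⟩ => ⟨hyA, Fin.cases hy0 fun l => ?_⟩
        simpa [add_assoc, add_comm 1] using hy l

lemma measure_avoid_block_le [IsFiniteMeasure μ] (hμ : IsMinorizedBy μ α) {m : ℕ}
    (w : Fin m → Γ) (N : ℕ) :
    μ {y | ∀ j < N, ¬ ∀ l : Fin m, y (j * m + l) = w l} ≤ (1 - α ^ m) ^ N * μ univ := by
  induction N with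
  | zero => simp
  | succ N ih =>
    set E := {y : ℕ → Γ | ∀ j < N, ¬ ∀ l : Fin m, y (j * m + l) = w l}
    set B := {y : ℕ → Γ | ∀ l : Fin m, y (N * m + l) = w l}
    have hE : ∀ x ∈ E, cylinder x (N * m) ⊆ E := by
      intro x hx y hy j hj hyj
      refine hx j hj fun l => ?_
      have hlt : j * m + l < N * m := calc
        j * m + l < (j + 1) * m := by rw [Nat.succ_mul]; exact Nat.add_lt_add_left l.2 _
        _ ≤ N * m := Nat.mul_le_mul_right m hj
      rw [← hy _ hlt, hyj l]
    have hB : MeasurableSet B := by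
      simp only [B, ofPred_forall]
      exact .iInter fun l => measurableSet_eq_fun (measurable_pi_apply _) measurable_const
    have hsplit : μ (E \ B) = μ E - μ (E ∩ B) :=
      ENNReal.eq_sub_of_add_eq (measure_ne_top μ _)
        (by rw [add_comm, measure_inter_add_sdiff E hB])
    calc μ {y | ∀ j < N + 1, ¬ ∀ l : Fin m, y (j * m + l) = w l}
        ≤ μ (E \ B) := measure_mono fun y hy =>
          ⟨fun j hj => hy j (hj.trans N.lt_succ_self), hy N N.lt_succ_self⟩
      _ ≤ μ E - α ^ m * μ E := by
          rw [hsplit]; gcongr; exact hμ.pow_mul_measure_le_inter_block w hE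
      _ = (1 - α ^ m) * μ E := by
          rw [ENNReal.sub_mul fun _ _ => measure_ne_top μ E, one_mul]
      _ ≤ (1 - α ^ m) ^ (N + 1) * μ univ := by
          rw [pow_succ', mul_assoc]; gcongr

lemma measure_avoid_block_eq_zero [IsFiniteMeasure μ] (hμ : IsMinorizedBy μ α) (hα : α ≠ 0)
    {m : ℕ} (w : Fin m → Γ) : μ {y | ∀ j, ¬ ∀ l : Fin m, y (j + l) = w l} = 0 := by
  have hlt : 1 - α ^ m < 1 :=
    ENNReal.sub_lt_self ENNReal.one_ne_top one_ne_zero (pow_ne_zero m hα)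
  have htend : Tendsto (fun N : ℕ => (1 - α ^ m) ^ N * μ univ) atTop (𝓝 0) := by
    simpa using ENNReal.Tendsto.mul_const (ENNReal.tendsto_pow_atTop_nhds_zero_of_lt_one hlt)
      (Or.inr (measure_ne_top μ univ))
  refine le_antisymm (ge_of_tendsto' htend fun N => le_trans (measure_mono ?_)
    (hμ.measure_avoid_block_le w N)) bot_le
  exact fun y hy j _ => hy (j * m)

lemma measure_not_disjunctive [IsFiniteMeasure μ] (hμ : IsMinorizedBy μ α) (hα : α ≠ 0) :
    μ {σ | ¬ Disjunctive σ} = 0 := by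
  refine measure_mono_null (fun σ hσ => ?_) (measure_iUnion_null fun m =>
    measure_iUnion_null fun w => hμ.measure_avoid_block_eq_zero hα (m := m) w)
  simp only [mem_ofPred_eq, Disjunctive, not_forall, not_exists] at hσ
  obtain ⟨m, w, hw⟩ := hσ
  exact mem_iUnion₂.2 ⟨m, w, fun j => not_forall.2 (hw j)⟩

end Finite

end IsMinorizedBy

theorem chain_complete_connections_doubling_and_disjunctive_general
    {Γ : Type*} [Fintype Γ] [MeasurableSpace Γ] [MeasurableSingletonClass Γ]
    {S : Type*} [MeasurableSpace S] (Pr : Measure S) [IsProbabilityMeasure Pr]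
    (Z : ℕ → S → Γ) (hZ : ∀ n : ℕ, Measurable (Z n))
    (α : ENNReal) (hα : 0 < α)
    (hmin : ∀ (n : ℕ) (w : Fin (n + 1) → Γ),
      α * Pr {s : S | ∀ i : Fin n, Z i.1 s = w i.castSucc}
        ≤ Pr {s : S | ∀ i : Fin (n + 1), Z i.1 s = w i}) :
    (∃ r₀ : ℝ, 0 < r₀ ∧ ∀ (ψ : ℕ → Γ) (r : ℝ), 0 < r → r < r₀ →
        (Measure.map (fun s n => Z n s) Pr) {x : ℕ → Γ | baireDist ψ x < 2 * r}
          ≤ α⁻¹ * (Measure.map (fun s n => Z n s) Pr) {x : ℕ → Γ | baireDist ψ x < r}) ∧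
    (Measure.map (fun s n => Z n s) Pr) {σ : ℕ → Γ | ¬ Disjunctive σ} = 0 ∧
    Pr {s : S | Disjunctive (fun n : ℕ => Z n s)} = 1 := by
  have hF : Measurable fun s n => Z n s := measurable_pi_lambda _ hZ
  have : IsProbabilityMeasure (Pr.map fun s n => Z n s) :=
    Measure.isProbabilityMeasure_map hF.aemeasurable
  have hμ := isMinorizedBy_map hZ hmin
  have hnull := hμ.measure_not_disjunctive hα.ne'
  refine ⟨⟨1 / 2, one_half_pos, fun ψ r hr hr' =>
    hμ.measure_baireDist_lt_two_mul_le hα.ne' ψ hr hr'⟩, hnull, ?_⟩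
  refine (prob_compl_eq_zero_iff (hF measurableSet_setOf_disjunctive)).1 ?_
  rw [← hnull, ← compl_ofPred, Measure.map_apply hF measurableSet_setOf_disjunctive.compl,
    preimage_compl]

/-- chains with complete connections: if the process `(Z_n)` is
minorized by `α > 0` (initial distribution and all conditional marginals are `≥ α`,
expressed below via joint distributions), then the joint distribution `μ` of the
process on the Cantor space satisfies the doubling condition with constant `1/α`,
the set of non-disjunctive sequences is `μ`-null, and the chain generates a
disjunctive sequence almost surely. -/
theorem chain_complete_connections_doubling_and_disjunctive
    {Γ : Type*} [Fintype Γ] [Nonempty Γ] [MeasurableSpace Γ] [MeasurableSingletonClass Γ]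
    {S : Type*} [MeasurableSpace S] (Pr : Measure S) [IsProbabilityMeasure Pr]
    (Z : ℕ → S → Γ) (hZ : ∀ n : ℕ, Measurable (Z n))
    (α : ENNReal) (hα : 0 < α)
    (hmin : ∀ (n : ℕ) (w : Fin (n + 1) → Γ),
      α * Pr {s : S | ∀ i : Fin n, Z i.1 s = w i.castSucc}
        ≤ Pr {s : S | ∀ i : Fin (n + 1), Z i.1 s = w i}) :
    (∃ r₀ : ℝ, 0 < r₀ ∧ ∀ (ψ : ℕ → Γ) (r : ℝ), 0 < r → r < r₀ →
        (Measure.map (fun s n => Z n s) Pr) {x : ℕ → Γ | baireDist ψ x < 2 * r}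
          ≤ α⁻¹ * (Measure.map (fun s n => Z n s) Pr) {x : ℕ → Γ | baireDist ψ x < r}) ∧
    (Measure.map (fun s n => Z n s) Pr) {σ : ℕ → Γ | ¬ Disjunctive σ} = 0 ∧
    Pr {s : S | Disjunctive (fun n : ℕ => Z n s)} = 1 :=
  chain_complete_connections_doubling_and_disjunctive_general Pr Z hZ α hα hmin
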